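/- arXiv:1404.4065 — 3 statements merged into one kernel-verified Lean document; each statement's English description precedes it below -/
import Mathlib

section
/- Let k be a Noetherian commutative ring and let V be a finitely generated FI-module over k. Then every sub-FI-module of V is finitely generated. -/
open CategoryTheory

/-- The category FI of finite sets and injections. -/
def FI : Type 1 := FintypeCat

instance : CoeSort FI Type := ⟨fun S => S.1⟩

noncomputable instance (S : FI) : Fintype S := @Fintype.ofFinite _ S.2

instance : Category FI where
  Hom S T := {f : S → T // Function.Injective f}
  id S := ⟨id, fun _ _ h => h⟩
  comp f g := ⟨g.1 ∘ f.1, fun _ _ h => f.2 (g.2 h)⟩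

/-- A finite type, as an object of `FI`. -/
def FI.of (α : Type) [Fintype α] : FI := FintypeCat.of α

/-- An FI-module over `k` is a functor from `FI` to `k`-modules. -/
abbrev FIModule (k : Type) [CommRing k] := FI ⥤ ModuleCat.{0} k

variable {k : Type} [CommRing k]

/-- A sub-FI-module of an FI-module `V`. -/
structure SubFIModule (V : FIModule k) where
  carrier : ∀ S : FI, Submodule k (V.obj S)
  map_mem : ∀ {S T : FI} (f : S ⟶ T) (x : V.obj S), x ∈ carrier S → V.map f x ∈ carrier T

/-- An FI-module is finitely generated if some finite collection of elements
is contained in no proper sub-FI-module. -/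
def FIModule.FG (V : FIModule k) : Prop :=
  ∃ (ι : Type) (_ : Finite ι) (S : ι → FI) (v : ∀ i, V.obj (S i)),
    ∀ W : SubFIModule V, (∀ i, v i ∈ W.carrier (S i)) → ∀ T : FI, W.carrier T = ⊤

/-- A sub-FI-module is finitely generated if it is generated by finitely many
of its elements, i.e. some finite collection of its elements lies in no strictly
smaller sub-FI-module. -/
def SubFIModule.FG {V : FIModule k} (W : SubFIModule V) : Prop :=
  ∃ (ι : Type) (_ : Finite ι) (S : ι → FI) (v : ∀ i, V.obj (S i)),
    (∀ i, v i ∈ W.carrier (S i)) ∧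
    ∀ W' : SubFIModule V, (∀ i, v i ∈ W'.carrier (S i)) →
      ∀ T : FI, W.carrier T ≤ W'.carrier T

/-!
Every injection `S ↪ [n]` is a bijection `S ≃ [c]` followed by an order-preserving injection
`[c] ↪o [n]`, so a finitely generated FI-module `V` is a quotient of a finite direct sum of free
OI-modules, whose basis at level `n` consists of pairs `(j, s)` of a generator index `j` and an
`m j`-element subset `s ⊆ [n]` (the image of an ordered injection). Ordering these pairs
lexicographically, with colex on subsets, makes every ordered injection act strictly monotonically,
so leading terms behave as in Gröbner basis theory. Divisibility of basis elements is a
well-quasi-order by Higman's lemma; together with the ascending chain condition on ideals of `k`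
this shows that the leading coefficients of an OI-submodule are generated, up to divisibility, by
those of finitely many of its elements, and the usual leading-term reduction shows that these
elements generate it. A sub-FI-module of `V` is then generated by the images of the finitely many
elements generating its preimage.
-/

section WellQuasiOrder

variable {α β : Type*} {r : α → α → Prop} [IsPreorder α r]

theorem WellQuasiOrdered.not_strictMono_of_monotone (hr : WellQuasiOrdered r) [Preorder β]
    [WellFoundedGT β] (f : ℕ → α → β) (hf : ∀ i a b, r a b → f i a ≤ f i b) :
    ¬ StrictMono f := by
  intro hmono
  have hstep (i : ℕ) : ∃ a, f i a < f (i + 1) a := (Pi.lt_def.1 (hmono i.lt_succ_self)).2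
  choose p hp using hstep
  obtain ⟨φ, hφ⟩ := hr.exists_monotone_subseq p
  refine not_strictMono_of_wellFoundedGT (fun j => f (φ j) (p (φ j)))
    (strictMono_nat_of_lt_succ fun j => ?_)
  calc f (φ j) (p (φ j)) < f (φ j + 1) (p (φ j)) := hp _
    _ ≤ f (φ (j + 1)) (p (φ j)) := hmono.monotone (φ.strictMono j.lt_succ_self) _
    _ ≤ f (φ (j + 1)) (p (φ (j + 1))) := hf _ _ _ (hφ _ _ j.le_succ)

theorem WellQuasiOrdered.exists_finset_forall_mem_span (hr : WellQuasiOrdered r) {E R M : Type*}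
    [Semiring R] [AddCommMonoid M] [Module R M] [IsNoetherian R M] (π : E → α) (ℓ : E → M) :
    ∃ F : Finset E, ∀ e, ℓ e ∈ Submodule.span R (ℓ '' {f | f ∈ F ∧ r (π f) (π e)}) := by
  classical
  -- Otherwise, adjoining a bad element at each step yields a strictly increasing chain.
  by_contra! h
  choose bad hbad using h
  let chain (i : ℕ) : Finset E := (fun F => insert (bad F) F)^[i] ∅
  let L (i : ℕ) (a : α) : Submodule R M := Submodule.span R (ℓ '' {f | f ∈ chain i ∧ r (π f) a})
  refine hr.not_strictMono_of_monotone L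
    (fun i a b hab =>
      Submodule.span_mono (Set.image_mono fun f hf => ⟨hf.1, _root_.trans hf.2 hab⟩))
    (strictMono_nat_of_lt_succ fun i => ?_)
  have hchain : chain (i + 1) = insert (bad (chain i)) (chain i) :=
    Function.iterate_succ_apply' _ _ _
  have hle : L i ≤ L (i + 1) := fun a => Submodule.span_mono (Set.image_mono fun f hf =>
    ⟨hchain ▸ Finset.mem_insert_of_mem hf.1, hf.2⟩)
  refine lt_of_le_not_ge hle fun hge => hbad (chain i) (hge _ ?_)
  exact Submodule.subset_span ⟨_, ⟨hchain ▸ Finset.mem_insert_self _ _, refl _⟩, rfl⟩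

end WellQuasiOrder

theorem List.exists_orderEmbedding_of_ofFn_sublist {γ : Type*} {n n' : ℕ} {f : Fin n → γ}
    {f' : Fin n' → γ} (h : (List.ofFn f).Sublist (List.ofFn f')) :
    ∃ g : Fin n ↪o Fin n', ∀ i, f' (g i) = f i := by
  obtain ⟨g, hg⟩ := List.sublist_iff_exists_fin_orderEmbedding_get_eq.1 h
  let e := Fin.castOrderIso (List.length_ofFn (f := f))
  let e' := Fin.castOrderIso (List.length_ofFn (f := f'))
  refine ⟨e.symm.toOrderEmbedding.trans (g.trans e'.toOrderEmbedding), fun i => ?_⟩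
  simpa [e, e', Fin.cast] using (hg (e.symm i)).symm

theorem Finsupp.le_of_forall_exists_eq_of_supported_Iic {A R : Type*} [LinearOrder A]
    [WellFoundedLT A] [Ring R] {M N : Submodule R (A →₀ R)}
    (h : ∀ y ∈ M, ∀ b, y ∈ Finsupp.supported R R (Set.Iic b) →
      ∃ z ∈ M ⊓ N, z ∈ Finsupp.supported R R (Set.Iic b) ∧ z b = y b) :
    M ≤ N := by
  intro y hy
  induction hmax : y.support.max using WellFoundedLT.induction generalizing y with
  | ind β ih =>
    rcases eq_or_ne y 0 with rfl | hy0
    · exact N.zero_mem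
    obtain ⟨b, hb⟩ := Finset.max_of_nonempty (Finsupp.support_nonempty_iff.2 hy0)
    have hyb : y ∈ Finsupp.supported R R (Set.Iic b) := fun a ha => Finset.le_max_of_eq ha hb
    obtain ⟨z, ⟨hzM, hzN⟩, hzb, hzy⟩ := h y hy b hyb
    have hlt : (y - z).support.max < β := by
      rw [← hmax, hb, Finset.max_eq_sup_coe, Finset.sup_lt_iff (WithBot.bot_lt_coe b)]
      intro a ha
      refine WithBot.coe_lt_coe.2 (lt_of_le_of_ne ((Finsupp.supported R R _).sub_mem hyb hzb ha) ?_)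
      rintro rfl
      simp [hzy] at ha
    rw [← sub_add_cancel y z]
    exact N.add_mem (ih _ hlt (M.sub_mem hy hzM) rfl) hzN

/-- A basis element of the free OI-module `⨁ j, k[OI([m j], [n])]` at level `n`: the ordered
injection `[m j] ↪o [n]` is recorded by its image `supp`. -/
@[ext]
structure OIMonomial {J : Type*} (m : J → ℕ) (n : ℕ) where
  gen : J
  supp : Finset (Fin n)
  card_supp : supp.card = m gen

namespace OIMonomial

variable {J : Type*} {m : J → ℕ} {n n' n'' : ℕ}

def toLexColex (a : OIMonomial m n) : J ×ₗ Colex (Finset (Fin n)) := toLex (a.gen, toColex a.supp)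

theorem toLexColex_injective : Function.Injective (toLexColex (m := m) (n := n)) := by
  rintro ⟨j, s, hs⟩ ⟨j', s', hs'⟩ h
  simp_all [toLexColex]

noncomputable instance [LinearOrder J] : LinearOrder (OIMonomial m n) :=
  LinearOrder.lift' _ toLexColex_injective

instance [Finite J] : Finite (OIMonomial m n) :=
  Finite.of_injective (fun a => (a.gen, a.supp)) fun a b h => by
    obtain ⟨j, s, hs⟩ := a
    obtain ⟨j', s', hs'⟩ := b
    simp_all

def map (g : Fin n ↪o Fin n') (a : OIMonomial m n) : OIMonomial m n' :=
  ⟨a.gen, a.supp.image g, by rw [Finset.card_image_of_injective _ g.injective, a.card_supp]⟩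

@[simp] theorem map_refl (a : OIMonomial m n) : a.map (RelEmbedding.refl (· ≤ ·)) = a := by
  ext <;> simp [map]

theorem map_map (g : Fin n ↪o Fin n') (g' : Fin n' ↪o Fin n'') (a : OIMonomial m n) :
    (a.map g).map g' = a.map (g.trans g') := by
  ext <;> simp [map]

theorem map_injective (g : Fin n ↪o Fin n') : Function.Injective (map (m := m) g) :=
  fun _ _ h => OIMonomial.ext (congrArg OIMonomial.gen h :)
    (Finset.image_injective g.injective (congrArg OIMonomial.supp h))

theorem map_strictMono [LinearOrder J] (g : Fin n ↪o Fin n') :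
    StrictMono (map (m := m) g) := by
  intro a b hab
  change toLexColex a < toLexColex b at hab
  change toLexColex (a.map g) < toLexColex (b.map g)
  simp only [toLexColex, Prod.Lex.toLex_lt_toLex, map] at hab ⊢
  rwa [Finset.Colex.toColex_image_lt_toColex_image g.strictMono]

def Divides (a b : Σ n, OIMonomial m n) : Prop :=
  ∃ g : Fin a.1 ↪o Fin b.1, a.2.map g = b.2

instance : IsPreorder (Σ n, OIMonomial m n) Divides where
  refl a := ⟨RelEmbedding.refl _, map_refl a.2⟩
  trans _ _ _ := fun ⟨g, hg⟩ ⟨g', hg'⟩ => ⟨g.trans g', by rw [← map_map, hg, hg']⟩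

theorem divides_of_sublist {a : OIMonomial m n} {b : OIMonomial m n'} (hgen : a.gen = b.gen)
    (h : (List.ofFn fun i => decide (i ∈ a.supp)).Sublist
      (List.ofFn fun i => decide (i ∈ b.supp))) :
    Divides ⟨n, a⟩ ⟨n', b⟩ := by
  obtain ⟨g, hg⟩ := List.exists_orderEmbedding_of_ofFn_sublist h
  refine ⟨g, OIMonomial.ext hgen (Finset.eq_of_subset_of_card_le ?_ ?_)⟩
  · simp only [map, Finset.image_subset_iff]
    intro i hi
    simpa [hi] using hg i
  · simp [map, Finset.card_image_of_injective _ g.injective, a.card_supp, b.card_supp, hgen]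

theorem wellQuasiOrdered_divides [Finite J] : WellQuasiOrdered (Divides (m := m)) := by
  have higman : WellQuasiOrdered (List.SublistForall₂ (α := Bool) (· = ·)) := by
    rw [← Set.partiallyWellOrderedOn_univ_iff]
    simpa using (Set.partiallyWellOrderedOn_univ_iff.2
      (Finite.wellQuasiOrdered (α := Bool) (· = ·))).partiallyWellOrderedOn_sublistForall₂
  intro f
  obtain ⟨i, j, hij, hgen, hsub⟩ := ((Finite.wellQuasiOrdered (α := J) (· = ·)).prod higman)
    fun i => ((f i).2.gen, List.ofFn fun x => decide (x ∈ (f i).2.supp))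
  refine ⟨i, j, hij, divides_of_sublist hgen ?_⟩
  obtain ⟨l, hl, hsub⟩ := List.sublistForall₂_iff.1 hsub
  rw [List.forall₂_eq_eq_eq] at hl
  subst hl
  exact hsub

noncomputable def lmap (g : Fin n ↪o Fin n') :
    (OIMonomial m n →₀ k) →ₗ[k] (OIMonomial m n' →₀ k) :=
  Finsupp.lmapDomain k k (map g)

theorem lmap_apply_map (g : Fin n ↪o Fin n') (y : OIMonomial m n →₀ k) (a : OIMonomial m n) :
    lmap g y (a.map g) = y a :=
  Finsupp.mapDomain_apply (map_injective g) y a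

theorem lmap_mem_supported_Iic [LinearOrder J] (g : Fin n ↪o Fin n') {y : OIMonomial m n →₀ k}
    {b : OIMonomial m n} (hy : y ∈ Finsupp.supported k k (Set.Iic b)) :
    lmap g y ∈ Finsupp.supported k k (Set.Iic (b.map g)) := by
  refine Finsupp.supported_mono (map_strictMono g).monotone.image_Iic_subset ?_
  rw [← Finsupp.lmapDomain_supported]
  exact Submodule.mem_map_of_mem hy

structure BoundedElement [LinearOrder J] (Y : ∀ n, Submodule k (OIMonomial m n →₀ k)) where
  level : ℕ
  bound : OIMonomial m level
  elem : OIMonomial m level →₀ k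
  mem : elem ∈ Y level
  supported : elem ∈ Finsupp.supported k k (Set.Iic bound)

theorem exists_finset_le_span_lmap [IsNoetherianRing k] [Finite J] [LinearOrder J]
    (Y : ∀ n, Submodule k (OIMonomial m n →₀ k))
    (hY : ∀ {n n'} (g : Fin n ↪o Fin n') y, y ∈ Y n → lmap g y ∈ Y n') :
    ∃ F : Finset (BoundedElement Y), ∀ n, Y n ≤
      Submodule.span k {z | ∃ e ∈ F, ∃ g : Fin e.level ↪o Fin n, lmap g e.elem = z} := by
  obtain ⟨F, hF⟩ := wellQuasiOrdered_divides.exists_finset_forall_mem_span (R := k)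
    (fun e : BoundedElement Y => (⟨e.level, e.bound⟩ : Σ n, OIMonomial m n))
    (fun e => e.elem e.bound)
  refine ⟨F, fun n => Finsupp.le_of_forall_exists_eq_of_supported_Iic fun y hy b hyb => ?_⟩
  obtain ⟨t, ht, c, hc⟩ := (Submodule.mem_span_image_iff_exists_fun k).1 (hF ⟨n, b, y, hy, hyb⟩)
  choose g hg using fun e : t => (ht e.2).2
  simp only at hg hc
  refine ⟨∑ e : t, c e • lmap (g e) e.1.elem, ⟨?_, ?_⟩, ?_, ?_⟩
  · exact Submodule.sum_mem _ fun e _ => Submodule.smul_mem _ _ (hY _ _ e.1.mem)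
  · exact Submodule.sum_mem _ fun e _ => Submodule.smul_mem _ _
      (Submodule.subset_span ⟨e, (ht e.2).1, g e, rfl⟩)
  · refine Submodule.sum_mem _ fun e _ => Submodule.smul_mem _ _ ?_
    simpa [hg e] using lmap_mem_supported_Iic (g e) e.1.supported
  · rw [← hc, Finsupp.finsetSum_apply]
    refine Finset.sum_congr rfl fun e _ => ?_
    rw [Finsupp.smul_apply, ← lmap_apply_map (g e) e.1.elem, hg e]

end OIMonomial

namespace FI

def homOfEmbedding {α β : Type} [Fintype α] [Fintype β] (g : α ↪ β) : FI.of α ⟶ FI.of β :=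
  ⟨g, g.injective⟩

noncomputable def isoFin (T : FI) : T ≅ FI.of (Fin (Fintype.card T)) where
  hom := ⟨Fintype.equivFin T, (Fintype.equivFin T).injective⟩
  inv := ⟨(Fintype.equivFin T).symm, (Fintype.equivFin T).symm.injective⟩
  hom_inv_id := Subtype.ext (funext (Fintype.equivFin T).symm_apply_apply)
  inv_hom_id := Subtype.ext (funext (Fintype.equivFin T).apply_symm_apply)

end FI

namespace SubFIModule

variable {V : FIModule k}

def span {ι : Type} (S : ι → FI) (v : ∀ i, V.obj (S i)) : SubFIModule V where
  carrier T := Submodule.span k {x | ∃ i, ∃ f : S i ⟶ T, V.map f (v i) = x}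
  map_mem g x hx := by
    refine Submodule.span_mono ?_ (Submodule.apply_mem_span_image_of_mem_span (V.map g).hom hx)
    rintro _ ⟨_, ⟨i, f, rfl⟩, rfl⟩
    exact ⟨i, f ≫ g, by simp⟩

variable {ι : Type} {S : ι → FI} {v : ∀ i, V.obj (S i)}

theorem mem_span_self (i : ι) : v i ∈ (span S v).carrier (S i) :=
  Submodule.subset_span ⟨i, 𝟙 _, by simp⟩

theorem span_le {W : SubFIModule V} (hv : ∀ i, v i ∈ W.carrier (S i)) (T : FI) :
    (span S v).carrier T ≤ W.carrier T :=
  Submodule.span_le.2 <| by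
    rintro _ ⟨i, f, rfl⟩
    exact W.map_mem f _ (hv i)

theorem fg_of_le_span [Finite ι] {W : SubFIModule V} (hv : ∀ i, v i ∈ W.carrier (S i))
    (hW : ∀ T, W.carrier T ≤ (span S v).carrier T) : W.FG :=
  ⟨ι, ‹_›, S, v, hv, fun _ hW' T => (hW T).trans (span_le hW' T)⟩

theorem le_of_le_fin {W W' : SubFIModule V}
    (h : ∀ n, W.carrier (FI.of (Fin n)) ≤ W'.carrier (FI.of (Fin n))) (T : FI) :
    W.carrier T ≤ W'.carrier T := by
  intro x hx
  have := W'.map_mem (FI.isoFin T).inv _ (h _ (W.map_mem (FI.isoFin T).hom x hx))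
  rwa [← Functor.mapIso_hom, ← Functor.mapIso_inv, Iso.hom_inv_id_apply] at this

end SubFIModule

theorem Finset.exists_orderEmbOfFin_comp_eq {α : Type*} [Fintype α] {n : ℕ} {f : α → Fin n}
    (hf : Function.Injective f) :
    ∃ (e : α ↪ Fin (Fintype.card α)) (s : Finset (Fin n)) (hs : s.card = Fintype.card α),
      s.orderEmbOfFin hs ∘ e = f := by
  classical
  let s := Finset.univ.image f
  have hs : s.card = Fintype.card α := Finset.card_image_of_injective _ hf
  refine ⟨⟨fun x => (s.orderIsoOfFin hs).symm ⟨f x, Finset.mem_image_of_mem f (Finset.mem_univ x)⟩,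
    fun x y hxy => hf (by simpa using hxy)⟩, s, hs, funext fun x => ?_⟩
  rw [Function.comp_apply, ← Finset.coe_orderIsoOfFin_apply]
  exact congrArg Subtype.val ((s.orderIsoOfFin hs).apply_symm_apply _)

namespace OIMonomial

variable {J : Type} {m : J → ℕ} {n n' : ℕ}

def toHom (a : OIMonomial m n) : FI.of (Fin (m a.gen)) ⟶ FI.of (Fin n) :=
  FI.homOfEmbedding (a.supp.orderEmbOfFin a.card_supp).toEmbedding

theorem toHom_map (g : Fin n ↪o Fin n') (a : OIMonomial m n) :
    (a.map g).toHom = a.toHom ≫ FI.homOfEmbedding g.toEmbedding := by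
  refine Subtype.ext ?_
  change ⇑((a.map g).supp.orderEmbOfFin _) = g ∘ a.supp.orderEmbOfFin a.card_supp
  exact (Finset.orderEmbOfFin_unique _
    (fun x => Finset.mem_image_of_mem g (Finset.orderEmbOfFin_mem _ _ x))
    (g.strictMono.comp (Finset.orderEmbOfFin _ _).strictMono)).symm

variable (V : FIModule k) (u : ∀ j, V.obj (FI.of (Fin (m j))))

noncomputable def eval (n : ℕ) : (OIMonomial m n →₀ k) →ₗ[k] V.obj (FI.of (Fin n)) :=
  Finsupp.linearCombination k fun a => V.map a.toHom (u a.gen)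

theorem eval_lmap (g : Fin n ↪o Fin n') (y : OIMonomial m n →₀ k) :
    eval V u n' (lmap g y) = V.map (FI.homOfEmbedding g.toEmbedding) (eval V u n y) := by
  rw [eval, eval, lmap, Finsupp.lmapDomain_apply, Finsupp.linearCombination_mapDomain,
    Finsupp.apply_linearCombination]
  congr 2
  funext a
  change V.map (a.map g).toHom (u a.gen) = V.map _ (V.map a.toHom (u a.gen))
  simp only [toHom_map]
  exact Functor.map_comp_apply _ _ _ _

end OIMonomial

open OIMonomial in
theorem SubFIModule.fg_of_surjective_eval [IsNoetherianRing k] {V : FIModule k} {J : Type}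
    [Finite J] {m : J → ℕ} (u : ∀ j, V.obj (FI.of (Fin (m j))))
    (hu : ∀ n, Function.Surjective (eval V u n)) (W : SubFIModule V) : W.FG := by
  let : LinearOrder J := LinearOrder.lift' _ (Finite.equivFin J).injective
  let Y n := (W.carrier (FI.of (Fin n))).comap (eval V u n)
  have hY {n n'} (g : Fin n ↪o Fin n') (y) (hy : y ∈ Y n) : lmap g y ∈ Y n' := by
    simpa only [Y, Submodule.mem_comap, eval_lmap] using W.map_mem _ _ hy
  obtain ⟨F, hF⟩ := exists_finset_le_span_lmap Y hY
  refine fg_of_le_span (S := fun e : F => FI.of (Fin e.1.level))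
    (v := fun e => eval V u _ e.1.elem) (fun e => e.1.mem) (le_of_le_fin fun n x hx => ?_)
  obtain ⟨y, rfl⟩ := hu n x
  refine Submodule.span_le.2 ?_ (Submodule.apply_mem_span_image_of_mem_span _ (hF n hx))
  rintro _ ⟨_, ⟨e, he, g, rfl⟩, rfl⟩
  exact Submodule.subset_span ⟨⟨e, he⟩, FI.homOfEmbedding g.toEmbedding, (eval_lmap V u g _).symm⟩

theorem stmt0 {k : Type} [CommRing k] [IsNoetherianRing k]
    (V : FIModule k) (hV : V.FG) (W : SubFIModule V) : W.FG := by
  obtain ⟨ι, hι, S, v, hv⟩ := hV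
  refine W.fg_of_surjective_eval (J := Σ i, (S i ↪ Fin (Fintype.card (S i))))
    (fun j => V.map ⟨j.2, j.2.injective⟩ (v j.1)) fun n x => ?_
  have hx : x ∈ (SubFIModule.span S v).carrier (FI.of (Fin n)) := by
    rw [hv _ SubFIModule.mem_span_self]
    trivial
  rw [← LinearMap.mem_range, OIMonomial.eval, Finsupp.range_linearCombination]
  refine Submodule.span_le.2 ?_ hx
  rintro _ ⟨i, f, rfl⟩
  obtain ⟨e, s, hs, hf⟩ := Finset.exists_orderEmbOfFin_comp_eq f.2
  refine Submodule.subset_span ⟨⟨⟨i, e⟩, s, hs⟩, ?_⟩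
  dsimp only
  rw [← Functor.map_comp_apply]
  exact congrArg (fun g => V.map g (v i)) (Subtype.ext hf)
end

section
/- Let 𝔽_q be a finite field with q elements and let n ≥ 2. Then the number of monic squarefree polynomials of degree n in 𝔽_q[T] equals q^n − q^{n−1}. -/
open Polynomial UniqueFactorizationMonoid

/-- The set of monic squarefree polynomials of degree `n` over `F`. -/
def monicSquarefree (F : Type) [Field F] (n : ℕ) : Set (Polynomial F) :=
  {f : Polynomial F | f.Monic ∧ Squarefree f ∧ f.natDegree = n}

namespace SFAux

variable {F : Type} [Field F]

/-- The set of monic polynomials of degree `n`. -/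
def monicDeg (F : Type) [Field F] (n : ℕ) : Set (Polynomial F) :=
  {f | f.Monic ∧ f.natDegree = n}

noncomputable def monicDegEquiv (n : ℕ) : monicDeg F n ≃ (Polynomial.degreeLT F n) where
  toFun f := ⟨f.1 - X ^ n, by
    rw [Polynomial.mem_degreeLT]
    have h1 : (f : F[X]).degree = (n : ℕ) := by
      rw [degree_eq_natDegree f.2.1.ne_zero, f.2.2]
    have := degree_sub_lt (q := X ^ n) (by rw [h1, degree_X_pow]) f.2.1.ne_zero
      (by rw [f.2.1.leadingCoeff, (monic_X_pow n).leadingCoeff])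
    rwa [h1] at this⟩
  invFun p := ⟨X ^ n + p.1, by
    have hd : (p : F[X]).degree < (X ^ n : F[X]).degree := by
      rw [degree_X_pow]; exact Polynomial.mem_degreeLT.mp p.2
    refine ⟨monic_X_pow_add (Polynomial.mem_degreeLT.mp p.2), ?_⟩
    rw [natDegree_eq_of_degree_eq_some (by rw [degree_add_eq_left_of_degree_lt hd, degree_X_pow])]⟩
  left_inv f := by ext1; ring
  right_inv p := by ext1; ring

lemma monicDeg_finite [Fintype F] (n : ℕ) : (monicDeg F n).Finite := by
  have : Finite (monicDeg F n) := by
    have e := (monicDegEquiv (F := F) n).trans (Polynomial.degreeLTEquiv F n).toEquiv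
    exact Finite.of_equiv _ e.symm
  exact Set.finite_coe_iff.mp this

lemma ncard_monicDeg [Fintype F] (n : ℕ) : (monicDeg F n).ncard = Fintype.card F ^ n := by
  rw [← Nat.card_coe_set_eq,
    Nat.card_congr ((monicDegEquiv (F := F) n).trans (Polynomial.degreeLTEquiv F n).toEquiv),
    Nat.card_eq_fintype_card, Fintype.card_fun, Fintype.card_fin]

/-- Existence of the squarefree decomposition. -/
lemma exists_decomp : ∀ (N : ℕ) (f : F[X]), f.Monic → f.natDegree ≤ N →
    ∃ g h : F[X], g.Monic ∧ Squarefree g ∧ h.Monic ∧ f = g * h ^ 2 := by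
  intro N
  induction N using Nat.strong_induction_on with
  | _ N ih =>
    intro f hf hdeg
    by_cases hsq : Squarefree f
    · exact ⟨f, 1, hf, hsq, monic_one, by ring⟩
    · classical
      simp only [Squarefree, not_forall] at hsq
      obtain ⟨x, hxd, hxu⟩ := hsq
      have hx0 : x ≠ 0 := by
        rintro rfl
        exact hf.ne_zero (by simpa using zero_dvd_iff.mp (by simpa using hxd))
      set p := normalize x with hp
      have hpm : p.Monic := monic_normalize hx0
      have hpu : ¬ IsUnit p := fun h => hxu ((normalize_associated x).isUnit h)
      have hpd : p * p ∣ f := by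
        have : Associated (p * p) (x * x) := (normalize_associated x).mul_mul (normalize_associated x)
        exact this.dvd.trans hxd
      have hpdeg : 1 ≤ p.natDegree := by
        rcases Nat.eq_zero_or_pos p.natDegree with h0 | h1
        · exact absurd (isUnit_iff_degree_eq_zero.mpr
            (by rw [degree_eq_natDegree hpm.ne_zero, h0]; rfl)) hpu
        · exact h1
      obtain ⟨f', hf'⟩ := hpd
      have hf'm : f'.Monic := (hpm.mul hpm).of_mul_monic_left (hf' ▸ hf)
      have hdeg' : f'.natDegree + 2 * p.natDegree = f.natDegree := by
        rw [hf', natDegree_mul (mul_ne_zero hpm.ne_zero hpm.ne_zero) hf'm.ne_zero,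
          natDegree_mul hpm.ne_zero hpm.ne_zero]
        ring
      have hN : f'.natDegree ≤ N - 1 := by omega
      have hNlt : N - 1 < N := by omega
      obtain ⟨g, h, hg, hgs, hh, heq⟩ := ih (N - 1) hNlt f' hf'm hN
      exact ⟨g, p * h, hg, hgs, hpm.mul hh, by rw [hf', heq]; ring⟩

/-- Uniqueness of the squarefree decomposition. -/
lemma uniq_decomp {g₁ g₂ h₁ h₂ : F[X]} (hg₁ : g₁.Monic) (hg₂ : g₂.Monic)
    (hh₁ : h₁.Monic) (hh₂ : h₂.Monic) (hs₁ : Squarefree g₁) (hs₂ : Squarefree g₂)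
    (heq : g₁ * h₁ ^ 2 = g₂ * h₂ ^ 2) : g₁ = g₂ ∧ h₁ = h₂ := by
  classical
  have key : normalizedFactors g₁ + 2 • normalizedFactors h₁
      = normalizedFactors g₂ + 2 • normalizedFactors h₂ := by
    have e1 := normalizedFactors_mul hg₁.ne_zero (pow_ne_zero 2 hh₁.ne_zero)
    have e2 := normalizedFactors_mul hg₂.ne_zero (pow_ne_zero 2 hh₂.ne_zero)
    rw [normalizedFactors_pow] at e1 e2
    rw [← e1, ← e2, heq]
  have n1 := (squarefree_iff_nodup_normalizedFactors hg₁.ne_zero).mp hs₁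
  have n2 := (squarefree_iff_nodup_normalizedFactors hg₂.ne_zero).mp hs₂
  rw [Multiset.nodup_iff_count_le_one] at n1 n2
  have hcnt : ∀ a : F[X],
      Multiset.count a (normalizedFactors g₁) = Multiset.count a (normalizedFactors g₂)
      ∧ Multiset.count a (normalizedFactors h₁) = Multiset.count a (normalizedFactors h₂) := by
    intro a
    have := congrArg (Multiset.count a) key
    simp only [Multiset.count_add, Multiset.count_nsmul] at this
    have := n1 a; have := n2 a
    omega
  have hg : normalizedFactors g₁ = normalizedFactors g₂ := Multiset.ext.mpr fun a => (hcnt a).1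
  have hh : normalizedFactors h₁ = normalizedFactors h₂ := Multiset.ext.mpr fun a => (hcnt a).2
  exact ⟨Polynomial.eq_of_monic_of_associated hg₁ hg₂
      ((associated_iff_normalizedFactors_eq_normalizedFactors hg₁.ne_zero hg₂.ne_zero).mpr hg),
    Polynomial.eq_of_monic_of_associated hh₁ hh₂
      ((associated_iff_normalizedFactors_eq_normalizedFactors hh₁.ne_zero hh₂.ne_zero).mpr hh)⟩

lemma my_ncard_prod {α β : Type*} (s : Set α) (t : Set β) :
    (s ×ˢ t).ncard = s.ncard * t.ncard := by
  rw [← Nat.card_coe_set_eq, ← Nat.card_coe_set_eq, ← Nat.card_coe_set_eq,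
    Nat.card_congr (Equiv.Set.prod s t), Nat.card_prod]

lemma my_ncard_biUnion {ι α : Type*} (s : Finset ι) (A : ι → Set α)
    (hfin : ∀ i ∈ s, (A i).Finite)
    (hdisj : ∀ i ∈ s, ∀ j ∈ s, i ≠ j → Disjoint (A i) (A j)) :
    (⋃ i ∈ s, A i).ncard = ∑ i ∈ s, (A i).ncard := by
  classical
  induction s using Finset.induction_on with
  | empty => simp
  | @insert a s' hnot ih =>
    rw [Finset.sum_insert hnot]
    have hU : (⋃ i ∈ insert a s', A i) = A a ∪ ⋃ i ∈ s', A i := by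
      simp [Set.biUnion_insert]
    rw [hU, Set.ncard_union_eq ?_ (hfin a (by simp)) ?_,
      ih (fun i hi => hfin i (by simp [hi]))
        (fun i hi j hj hij => hdisj i (by simp [hi]) j (by simp [hj]) hij)]
    · exact Set.disjoint_iUnion₂_right.mpr fun i hi =>
        hdisj a (by simp) i (Finset.mem_insert_of_mem (by exact_mod_cast hi))
          (fun h => hnot (by exact_mod_cast h ▸ hi))
    · exact Set.Finite.biUnion s'.finite_toSet
        (fun i hi => hfin i (Finset.mem_insert_of_mem (by exact_mod_cast hi)))

lemma sf_subset (n : ℕ) : monicSquarefree F n ⊆ monicDeg F n :=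
  fun _ hf => ⟨hf.1, hf.2.2⟩

lemma sf_finite [Fintype F] (n : ℕ) : (monicSquarefree F n).Finite :=
  (monicDeg_finite n).subset (sf_subset n)

/-- The master counting identity. -/
lemma master [Fintype F] (m : ℕ) :
    ∑ d ∈ Finset.range (m / 2 + 1), (monicSquarefree F (m - 2 * d)).ncard * Fintype.card F ^ d
      = Fintype.card F ^ m := by
  classical
  set A : ℕ → Set (F[X] × F[X]) := fun d => (monicSquarefree F (m - 2 * d)) ×ˢ (monicDeg F d)
    with hA
  set φ : F[X] × F[X] → F[X] := fun p => p.1 * p.2 ^ 2 with hφ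
  set B : Set (F[X] × F[X]) := ⋃ d ∈ Finset.range (m / 2 + 1), A d with hB
  have hbij : Set.BijOn φ B (monicDeg F m) := by
    refine ⟨?_, ?_, ?_⟩
    · rintro ⟨g, h⟩ hgh
      simp only [hB, Set.mem_iUnion, Finset.mem_range] at hgh
      obtain ⟨d, hd, hg, hh⟩ := hgh
      obtain ⟨hgm, hgs, hgd⟩ := hg
      obtain ⟨hhm, hhd⟩ := hh
      refine ⟨hgm.mul (hhm.pow _), ?_⟩
      rw [hφ]
      simp only
      rw [natDegree_mul hgm.ne_zero (pow_ne_zero 2 hhm.ne_zero), natDegree_pow, hgd, hhd]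
      omega
    · rintro ⟨g₁, h₁⟩ hp₁ ⟨g₂, h₂⟩ hp₂ heq
      simp only [hB, Set.mem_iUnion, Finset.mem_range] at hp₁ hp₂
      obtain ⟨d₁, hd₁, hg₁, hh₁⟩ := hp₁
      obtain ⟨d₂, hd₂, hg₂, hh₂⟩ := hp₂
      obtain ⟨he1, he2⟩ := uniq_decomp hg₁.1 hg₂.1 hh₁.1 hh₂.1 hg₁.2.1 hg₂.2.1 heq
      exact Prod.ext he1 he2
    · rintro f ⟨hfm, hfd⟩
      obtain ⟨g, h, hgm, hgs, hhm, heq⟩ := exists_decomp f.natDegree f hfm le_rfl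
      have hdeg : g.natDegree + 2 * h.natDegree = m := by
        have hc := congrArg Polynomial.natDegree heq
        rw [natDegree_mul hgm.ne_zero (pow_ne_zero 2 hhm.ne_zero), natDegree_pow, hfd] at hc
        omega
      refine ⟨(g, h), ?_, heq.symm⟩
      simp only [hB, Set.mem_iUnion, Finset.mem_range]
      refine ⟨h.natDegree, by omega, ?_⟩
      exact Set.mem_prod.mpr ⟨⟨hgm, hgs, show g.natDegree = m - 2 * h.natDegree by omega⟩, ⟨hhm, rfl⟩⟩
  have hfinA : ∀ d ∈ Finset.range (m / 2 + 1), (A d).Finite :=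
    fun d _ => (sf_finite _).prod (monicDeg_finite d)
  have h1 : (monicDeg F m).ncard = B.ncard := by
    rw [← hbij.image_eq, Set.ncard_image_of_injOn hbij.injOn]
  rw [← ncard_monicDeg m, h1, hB, my_ncard_biUnion _ _ hfinA ?_]
  · refine Finset.sum_congr rfl fun d _ => ?_
    rw [hA]
    simp only
    rw [my_ncard_prod, ncard_monicDeg]
  · intro i _ j _ hij
    rw [Set.disjoint_left]
    rintro ⟨g, h⟩ ⟨_, hhm, hhi⟩ ⟨_, _, hhj⟩
    exact hij (hhi ▸ hhj)

end SFAux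

theorem stmt9 (q n : ℕ) (hn : 2 ≤ n) (F : Type) [Field F] [Fintype F]
    (hq : Fintype.card F = q) :
    (monicSquarefree F n).ncard = q ^ n - q ^ (n - 1) := by
  subst hq
  have H := SFAux.master (F := F) n
  have H2 := SFAux.master (F := F) (n - 2)
  set Q := Fintype.card F with hQ
  have hsplit : n / 2 + 1 = (n - 2) / 2 + 1 + 1 := by omega
  rw [hsplit, Finset.sum_range_succ'] at H
  have htail : ∑ d ∈ Finset.range ((n - 2) / 2 + 1),
      (monicSquarefree F (n - 2 * (d + 1))).ncard * Q ^ (d + 1)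
      = Q * Q ^ (n - 2) := by
    rw [← H2, Finset.mul_sum]
    refine Finset.sum_congr rfl fun d hd => ?_
    simp only [Finset.mem_range] at hd
    have h1 : n - 2 * (d + 1) = n - 2 - 2 * d := by omega
    rw [h1, pow_succ]
    ring
  rw [htail] at H
  simp only [Nat.mul_zero, Nat.sub_zero, pow_zero, mul_one] at H
  have hpow : Q * Q ^ (n - 2) = Q ^ (n - 1) := by
    rw [← pow_succ']
    congr 1
    omega
  rw [hpow] at H
  omega
end

section
/- Let 𝔽_q be a finite field with q elements and let n ≥ 2. Then the number of monic squarefree polynomials of degree n in 𝔽_q[T] with an even number of monic irreducible factors equals the number of monic squarefree polynomials of degree n in 𝔽_q[T] with an odd number of monic irreducible factors. -/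
/-- The number of monic irreducible polynomials dividing `f` (for `f` squarefree this is
the number of factors in its factorization into distinct monic irreducibles). -/
noncomputable def irredFactorCount {F : Type} [Field F] (f : Polynomial F) : ℕ :=
  {p : Polynomial F | p.Monic ∧ Irreducible p ∧ p ∣ f}.ncard

set_option linter.unusedSectionVars false

open Polynomial Finset UniqueFactorizationMonoid

noncomputable section SFAux

open scoped Classical

variable {F : Type} [Field F] [Fintype F]

/-- Monic polynomials of degree `n` are equivalent to `degreeLT F n` via subtracting `X^n`. -/
def sfMonicEquiv (F : Type) [Field F] (n : ℕ) :
    {f : F[X] // f.Monic ∧ f.natDegree = n} ≃ degreeLT F n where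
  toFun f := ⟨f.1 - X ^ n, by
    rcases f with ⟨f, hm, hd⟩
    rw [mem_degreeLT]
    have h1 : f.degree = (n : WithBot ℕ) := by
      rw [degree_eq_natDegree hm.ne_zero, hd]
    calc (f - X ^ n).degree < f.degree := by
          apply degree_sub_lt (by rw [h1, degree_X_pow]) hm.ne_zero
          rw [hm.leadingCoeff, leadingCoeff_X_pow]
      _ = (n : WithBot ℕ) := h1⟩
  invFun g := ⟨X ^ n + g.1, by
    have hg : g.1.degree < (n : WithBot ℕ) := mem_degreeLT.mp g.2
    refine ⟨monic_X_pow_add hg, ?_⟩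
    have : (X ^ n + g.1).degree = (n : WithBot ℕ) := by
      rw [degree_add_eq_left_of_degree_lt (by rwa [degree_X_pow]), degree_X_pow]
    exact natDegree_eq_of_degree_eq_some this⟩
  left_inv f := by ext1; simp
  right_inv g := by ext1; simp

instance (n : ℕ) : Fintype (degreeLT F n) :=
  Fintype.ofEquiv _ (degreeLTEquiv F n).toEquiv.symm

instance (n : ℕ) : Fintype {f : F[X] // f.Monic ∧ f.natDegree = n} :=
  Fintype.ofEquiv _ (sfMonicEquiv F n).symm

/-- The finset of monic polynomials of degree `n`. -/
def monicFinset (F : Type) [Field F] [Fintype F] (n : ℕ) : Finset F[X] :=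
  (Finset.univ : Finset {f : F[X] // f.Monic ∧ f.natDegree = n}).map
    ⟨Subtype.val, Subtype.val_injective⟩

lemma mem_monicFinset {n : ℕ} {f : F[X]} :
    f ∈ monicFinset F n ↔ f.Monic ∧ f.natDegree = n := by
  simp [monicFinset]

lemma card_monicFinset (n : ℕ) :
    (monicFinset F n).card = Fintype.card F ^ n := by
  rw [monicFinset, Finset.card_map, Finset.card_univ,
    Fintype.card_congr ((sfMonicEquiv F n).trans (degreeLTEquiv F n).toEquiv)]
  simp


/-- Möbius function on F[X]. -/
def sfMu (f : F[X]) : ℤ :=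
  if Squarefree f then (-1) ^ (normalizedFactors f).card else 0

lemma sfMu_one : sfMu (1 : F[X]) = 1 := by
  simp [sfMu, squarefree_one, normalizedFactors_one]

lemma sfMu_prime_mul {p d : F[X]} (hpi : Irreducible p) (hp : p.Monic)
    (hpd : ¬ p ∣ d) (hd0 : d ≠ 0) : sfMu (p * d) = - sfMu d := by
  by_cases hsf : Squarefree d
  · have hsf' : Squarefree (p * d) :=
      squarefree_mul_iff.mpr ⟨hpi.isRelPrime_iff_not_dvd.mpr hpd, hpi.squarefree, hsf⟩
    rw [sfMu, sfMu, if_pos hsf', if_pos hsf,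
      normalizedFactors_mul hpi.ne_zero hd0, Multiset.card_add,
      normalizedFactors_irreducible hpi, hp.normalize_eq_self]
    simp [pow_add]
  · have hsf' : ¬ Squarefree (p * d) := fun h => hsf h.of_mul_right
    rw [sfMu, sfMu, if_neg hsf', if_neg hsf, neg_zero]

lemma sfMu_ne_zero {f : F[X]} (h : sfMu f ≠ 0) : Squarefree f := by
  by_contra hc; simp [sfMu, hc] at h

/-- The finset of monic divisors of `g`. -/
def divFinset (g : F[X]) : Finset F[X] :=
  ((Finset.range (g.natDegree + 1)).biUnion (monicFinset F)).filter (· ∣ g)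

lemma mem_divFinset {g d : F[X]} (hg : g ≠ 0) :
    d ∈ divFinset g ↔ d.Monic ∧ d ∣ g := by
  simp only [divFinset, Finset.mem_filter, Finset.mem_biUnion, Finset.mem_range,
    mem_monicFinset]
  constructor
  · rintro ⟨⟨k, _, hm, _⟩, hd⟩; exact ⟨hm, hd⟩
  · rintro ⟨hm, hd⟩
    exact ⟨⟨d.natDegree, Nat.lt_succ_of_le (natDegree_le_of_dvd hd hg), hm, rfl⟩, hd⟩

lemma divisor_sum_eq_zero {g : F[X]} (hg : g.Monic) (h1 : 1 ≤ g.natDegree) :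
    ∑ d ∈ divFinset g, sfMu d = 0 := by
  have hg0 : g ≠ 0 := hg.ne_zero
  obtain ⟨p, hpm, hpi, hpg⟩ := g.exists_monic_irreducible_factor
    (not_isUnit_of_natDegree_pos g h1)
  have hp0 : p ≠ 0 := hpi.ne_zero
  rw [← Finset.sum_filter_of_ne (p := fun d => Squarefree d)
    (fun x _ hx => sfMu_ne_zero hx)]
  set s : Finset F[X] := (divFinset g).filter (fun d => Squarefree d) with hs
  have hmem : ∀ a ∈ s, a.Monic ∧ a ∣ g ∧ Squarefree a := by
    intro a ha
    rw [hs, Finset.mem_filter, mem_divFinset hg0] at ha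
    exact ⟨ha.1.1, ha.1.2, ha.2⟩
  -- the involution
  set σ : F[X] → F[X] := fun a => if p ∣ a then a / p else a * p with hσ
  -- key facts
  have key : ∀ a ∈ s, σ a ∈ s ∧ sfMu a + sfMu (σ a) = 0 ∧ σ (σ a) = a := by
    intro a ha
    obtain ⟨ham, hag, hasf⟩ := hmem a ha
    have ha0 : a ≠ 0 := ham.ne_zero
    by_cases hpa : p ∣ a
    · -- σ a = a / p
      have hfac : p * (a / p) = a := EuclideanDomain.mul_div_cancel' hp0 hpa
      set e := a / p with he
      have he0 : e ≠ 0 := by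
        intro h; rw [h, mul_zero] at hfac; exact ha0 hfac.symm
      have hem : e.Monic := hpm.of_mul_monic_left (hfac ▸ ham)
      have hpe : ¬ p ∣ e := by
        intro hdvd
        obtain ⟨c, hc⟩ := hdvd
        have : p * p ∣ a := ⟨c, by rw [← hfac, hc]; ring⟩
        exact hpi.not_isUnit (hasf p this)
      have hesf : Squarefree e := (hfac ▸ hasf).of_mul_right
      have heg : e ∣ g := dvd_trans ⟨p, by rw [← hfac]; ring⟩ hag
      have hσa : σ a = e := by rw [hσ]; simp [hpa, he]
      have hmua : sfMu a = - sfMu e := by rw [← hfac, sfMu_prime_mul hpi hpm hpe he0]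
      refine ⟨?_, ?_, ?_⟩
      · rw [hσa, hs, Finset.mem_filter, mem_divFinset hg0]; exact ⟨⟨hem, heg⟩, hesf⟩
      · rw [hσa, hmua]; ring
      · rw [hσa, hσ]; simp only [if_neg hpe]; rw [mul_comm]; exact hfac
    · -- σ a = a * p
      have hσa : σ a = a * p := by rw [hσ]; simp [hpa]
      have hdvd : a * p ∣ g :=
        (hpi.isRelPrime_iff_not_dvd.mpr hpa).symm.mul_dvd hag hpg
      have hsf' : Squarefree (a * p) := by
        rw [mul_comm]
        exact squarefree_mul_iff.mpr
          ⟨hpi.isRelPrime_iff_not_dvd.mpr hpa, hpi.squarefree, hasf⟩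
      have hmu : sfMu (a * p) = - sfMu a := by
        rw [mul_comm]; exact sfMu_prime_mul hpi hpm hpa ha0
      refine ⟨?_, ?_, ?_⟩
      · rw [hσa, hs, Finset.mem_filter, mem_divFinset hg0]
        exact ⟨⟨ham.mul hpm, hdvd⟩, hsf'⟩
      · rw [hσa, hmu]; ring
      · rw [hσa, hσ]
        simp only [if_pos (Dvd.intro_left a rfl)]
        exact mul_div_cancel_right₀ a hp0
  refine Finset.sum_involution (fun a _ => σ a) (fun a ha => ?_) (fun a ha hne => ?_)
    (fun a ha => (key a ha).1) (fun a ha => (key a ha).2.2)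
  · have := (key a ha).2.1; linarith
  · intro hcontra
    have hca : σ a = a := hcontra
    have h2 := (key a ha).2.1
    rw [hca] at h2
    exact hne (by linarith)

/-- Sum of mu over monic polynomials of degree n. -/
def sfM (F : Type) [Field F] [Fintype F] (n : ℕ) : ℤ :=
  ∑ f ∈ monicFinset F n, sfMu f

lemma sfM_zero : sfM F 0 = 1 := by
  have : monicFinset F 0 = {1} := by
    ext f
    rw [mem_monicFinset, Finset.mem_singleton]
    constructor
    · rintro ⟨hm, hd⟩; exact hm.natDegree_eq_zero.mp hd
    · rintro rfl; exact ⟨monic_one, natDegree_one⟩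
  rw [sfM, this, Finset.sum_singleton, sfMu_one]

lemma sfExchange (n : ℕ) :
    ∑ g ∈ monicFinset F n, ∑ d ∈ divFinset g, sfMu d
      = ∑ k ∈ Finset.range (n + 1), sfM F k * (Fintype.card F : ℤ) ^ (n - k) := by
  rw [← Finset.sum_sigma (monicFinset F n) (fun g => divFinset g) (fun x => sfMu x.2)]
  have main : ∑ x ∈ (monicFinset F n).sigma (fun g => divFinset g), sfMu x.2
      = ∑ y ∈ (Finset.range (n + 1)).sigma
          (fun k => monicFinset F k ×ˢ monicFinset F (n - k)), sfMu y.2.1 := by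
    refine Finset.sum_nbij' (fun x => ⟨x.2.natDegree, (x.2, x.1 / x.2)⟩)
      (fun y => ⟨y.2.1 * y.2.2, y.2.1⟩) ?_ ?_ ?_ ?_ ?_
    · rintro ⟨g, d⟩ hx
      dsimp only
      rw [Finset.mem_sigma, mem_monicFinset] at hx
      obtain ⟨⟨hgm, hgd⟩, hd⟩ := hx
      replace hgm : g.Monic := hgm
      replace hgd : g.natDegree = n := hgd
      have hg0 : g ≠ 0 := hgm.ne_zero
      rw [mem_divFinset hg0] at hd
      obtain ⟨hdm, hdvd⟩ := hd
      have hd0 : d ≠ 0 := hdm.ne_zero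
      have hfac : d * (g / d) = g := EuclideanDomain.mul_div_cancel' hd0 hdvd
      have he0 : g / d ≠ 0 := by
        intro h; rw [h, mul_zero] at hfac; exact hg0 hfac.symm
      have hem : (g / d).Monic := hdm.of_mul_monic_left (by rwa [hfac])
      have hdeg : d.natDegree + (g / d).natDegree = n := by
        have := natDegree_mul hd0 he0
        rw [hfac] at this
        omega

      rw [Finset.mem_sigma, Finset.mem_range, Finset.mem_product,
        mem_monicFinset, mem_monicFinset]
      dsimp only
      exact ⟨by omega, ⟨hdm, rfl⟩, hem, by omega⟩
    · rintro ⟨k, d, e⟩ hy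
      dsimp only
      rw [Finset.mem_sigma, Finset.mem_range, Finset.mem_product,
        mem_monicFinset, mem_monicFinset] at hy
      obtain ⟨hk, ⟨hdm, hdd⟩, hem, hed⟩ := hy
      replace hk : k < n + 1 := hk
      replace hdm : d.Monic := hdm
      replace hdd : d.natDegree = k := hdd
      replace hem : e.Monic := hem
      replace hed : e.natDegree = n - k := hed
      have hprod : (d * e).Monic := hdm.mul hem
      rw [Finset.mem_sigma, mem_monicFinset, mem_divFinset hprod.ne_zero]
      dsimp only
      refine ⟨⟨hprod, ?_⟩, hdm, Dvd.intro e rfl⟩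
      rw [natDegree_mul hdm.ne_zero hem.ne_zero, hdd, hed]; omega
    · rintro ⟨g, d⟩ hx
      dsimp only
      rw [Finset.mem_sigma, mem_monicFinset] at hx
      obtain ⟨⟨hgm, hgd⟩, hd⟩ := hx
      replace hgm : g.Monic := hgm
      rw [mem_divFinset hgm.ne_zero] at hd
      have hc : d * (g / d) = g := EuclideanDomain.mul_div_cancel' hd.1.ne_zero hd.2
      simp only [Sigma.mk.inj_iff, heq_eq_eq, hc, Prod.mk.injEq]
    · rintro ⟨k, d, e⟩ hy
      dsimp only
      rw [Finset.mem_sigma, Finset.mem_range, Finset.mem_product,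
        mem_monicFinset, mem_monicFinset] at hy
      obtain ⟨hk, ⟨hdm, hdd⟩, hem, hed⟩ := hy
      replace hdm : d.Monic := hdm
      replace hdd : d.natDegree = k := hdd
      simp only [Sigma.mk.inj_iff, heq_eq_eq, Prod.mk.injEq, true_and]
      exact ⟨hdd, mul_div_cancel_left₀ _ hdm.ne_zero⟩
    · rintro ⟨g, d⟩ _; rfl
  rw [main, Finset.sum_sigma]
  refine Finset.sum_congr rfl fun k _ => ?_
  rw [Finset.sum_product, sfM, Finset.sum_mul]
  refine Finset.sum_congr rfl fun d _ => ?_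
  dsimp only
  rw [Finset.sum_const, card_monicFinset]
  ring

lemma sfKey (n : ℕ) (hn : 1 ≤ n) :
    ∑ k ∈ Finset.range (n + 1), sfM F k * (Fintype.card F : ℤ) ^ (n - k) = 0 := by
  rw [← sfExchange]
  refine Finset.sum_eq_zero fun g hg => ?_
  rw [mem_monicFinset] at hg
  exact divisor_sum_eq_zero hg.1 (by omega)

lemma sfM_eq_zero (n : ℕ) (hn : 2 ≤ n) : sfM F n = 0 := by
  have h1 := sfKey (F := F) n (by omega)
  have h2 := sfKey (F := F) (n - 1) (by omega)
  rw [Finset.sum_range_succ] at h1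
  have hrw : ∑ k ∈ Finset.range n, sfM F k * (Fintype.card F : ℤ) ^ (n - k)
      = (Fintype.card F : ℤ) *
        ∑ k ∈ Finset.range (n - 1 + 1), sfM F k * (Fintype.card F : ℤ) ^ (n - 1 - k) := by
    rw [Finset.mul_sum]
    have : n - 1 + 1 = n := by omega
    rw [this]
    refine Finset.sum_congr rfl fun k hk => ?_
    rw [Finset.mem_range] at hk
    have : n - k = (n - 1 - k) + 1 := by omega
    rw [this, pow_succ]
    ring
  rw [hrw, h2, mul_zero, zero_add, Nat.sub_self, pow_zero, mul_one] at h1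
  exact h1
lemma sfOmega_eq {f : F[X]} (hm : f.Monic) (hsf : Squarefree f) :
    {p : F[X] | p.Monic ∧ Irreducible p ∧ p ∣ f}.ncard = (normalizedFactors f).card := by
  have hf0 : f ≠ 0 := hm.ne_zero
  have hset : {p : F[X] | p.Monic ∧ Irreducible p ∧ p ∣ f}
      = ↑(normalizedFactors f).toFinset := by
    ext p
    simp only [Set.mem_setOf_eq, Finset.coe_sort_coe, Multiset.mem_toFinset,
      Finset.mem_coe]
    constructor
    · rintro ⟨hpm, hpi, hpd⟩
      obtain ⟨q, hq, hpq⟩ := exists_mem_normalizedFactors_of_dvd hf0 hpi hpd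
      have hq0 : q ≠ 0 := fun h => zero_notMem_normalizedFactors f (h ▸ hq)
      have hqm : q.Monic := by
        have := normalize_normalized_factor q hq
        rw [← this]
        exact monic_normalize hq0
      rwa [eq_of_monic_of_associated hpm hqm hpq]
    · intro hp
      have hp0 : p ≠ 0 := fun h => zero_notMem_normalizedFactors f (h ▸ hp)
      have hpm : p.Monic := by
        have := normalize_normalized_factor p hp
        rw [← this]
        exact monic_normalize hp0
      exact ⟨hpm, irreducible_of_normalized_factor p hp,
        dvd_of_mem_normalizedFactors hp⟩
  rw [hset, Set.ncard_coe_finset,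
    Multiset.toFinset_card_of_nodup
      ((squarefree_iff_nodup_normalizedFactors hf0).mp hsf)]

lemma sfM_split (n : ℕ) :
    sfM F n =
      ((monicFinset F n).filter
        (fun f => Squarefree f ∧ Even ((normalizedFactors f).card))).card -
      ((monicFinset F n).filter
        (fun f => Squarefree f ∧ Odd ((normalizedFactors f).card))).card := by
  have hpt : ∀ f : F[X], sfMu f =
      (if Squarefree f ∧ Even ((normalizedFactors f).card) then (1 : ℤ) else 0) -
      (if Squarefree f ∧ Odd ((normalizedFactors f).card) then (1 : ℤ) else 0) := by
    intro f
    by_cases hsf : Squarefree f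
    · by_cases he : Even ((normalizedFactors f).card)
      · rw [sfMu, if_pos hsf, if_pos ⟨hsf, he⟩,
          if_neg (fun h => (Nat.not_even_iff_odd.mpr h.2) he), he.neg_one_pow]
        ring
      · rw [sfMu, if_pos hsf, if_neg (fun h => he h.2),
          if_pos ⟨hsf, Nat.not_even_iff_odd.mp he⟩,
          (Nat.not_even_iff_odd.mp he).neg_one_pow]
        ring
    · rw [sfMu, if_neg hsf, if_neg (fun h => hsf h.1), if_neg (fun h => hsf h.1)]
      ring
  rw [sfM]
  calc ∑ f ∈ monicFinset F n, sfMu f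
      = ∑ f ∈ monicFinset F n,
          ((if Squarefree f ∧ Even ((normalizedFactors f).card) then (1 : ℤ) else 0) -
           (if Squarefree f ∧ Odd ((normalizedFactors f).card) then (1 : ℤ) else 0)) :=
        Finset.sum_congr rfl fun f _ => hpt f
    _ = _ := by rw [Finset.sum_sub_distrib, Finset.sum_boole, Finset.sum_boole]

/-- Among monic squarefree polynomials of degree `n ≥ 2` over a finite field, those with
an even number of monic irreducible factors are equinumerous with those with an odd
number of monic irreducible factors. -/
theorem stmt12 (q n : ℕ) (hn : 2 ≤ n) (F : Type) [Field F] [Fintype F]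
    (hq : Fintype.card F = q) :
    {f ∈ monicSquarefree F n | Even (irredFactorCount f)}.ncard =
      {f ∈ monicSquarefree F n | Odd (irredFactorCount f)}.ncard := by
  classical
  have hM := sfM_eq_zero (F := F) n hn
  rw [sfM_split] at hM
  have hcard : ((monicFinset F n).filter
        (fun f => Squarefree f ∧ Even ((normalizedFactors f).card))).card =
      ((monicFinset F n).filter
        (fun f => Squarefree f ∧ Odd ((normalizedFactors f).card))).card := by
    have := sub_eq_zero.mp hM
    exact_mod_cast this
  have hE : {f ∈ monicSquarefree F n | Even (irredFactorCount f)}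
      = ↑((monicFinset F n).filter
          (fun f => Squarefree f ∧ Even ((normalizedFactors f).card))) := by
    ext f
    simp only [Set.mem_setOf_eq, monicSquarefree, Finset.coe_filter,
      mem_monicFinset]
    constructor
    · rintro ⟨⟨hm, hsf, hdeg⟩, he⟩
      have h2 : irredFactorCount f = (normalizedFactors f).card := sfOmega_eq hm hsf
      exact ⟨⟨hm, hdeg⟩, hsf, h2 ▸ he⟩
    · rintro ⟨⟨hm, hdeg⟩, hsf, he⟩
      have h2 : irredFactorCount f = (normalizedFactors f).card := sfOmega_eq hm hsf
      exact ⟨⟨hm, hsf, hdeg⟩, h2 ▸ he⟩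
  have hO : {f ∈ monicSquarefree F n | Odd (irredFactorCount f)}
      = ↑((monicFinset F n).filter
          (fun f => Squarefree f ∧ Odd ((normalizedFactors f).card))) := by
    ext f
    simp only [Set.mem_setOf_eq, monicSquarefree, Finset.coe_filter,
      mem_monicFinset]
    constructor
    · rintro ⟨⟨hm, hsf, hdeg⟩, he⟩
      have h2 : irredFactorCount f = (normalizedFactors f).card := sfOmega_eq hm hsf
      exact ⟨⟨hm, hdeg⟩, hsf, h2 ▸ he⟩
    · rintro ⟨⟨hm, hdeg⟩, hsf, he⟩
      have h2 : irredFactorCount f = (normalizedFactors f).card := sfOmega_eq hm hsf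
      exact ⟨⟨hm, hsf, hdeg⟩, h2 ▸ he⟩
  rw [hE, hO, Set.ncard_coe_finset, Set.ncard_coe_finset, hcard]

end SFAux
end
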